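/- arXiv:1411.6309 — 3 statements merged into one kernel-verified Lean document; each statement's English description precedes it below -/
import Mathlib

section
/- Consequently, the foliation F = ker(dz) on T³ admits an infinitesimal deformation ζ = cos z dx + sin z dy (satisfying d_F ζ = 0) that is obstructed at second order: there is no formal path λ_t = dz + t ζ̄ + t² η̄ + o(t³) of one-forms satisfying λ_t ∧ dλ_t = 0, because the second-order term would require d_F η = ζ ∧ ∂_z ζ = dx ∧ dy, which is impossible. -/
open MeasureTheory Function Set


/-- Partial derivative of a scalar function on `ℝ^m` in the `i`-th coordinate direction. -/
noncomputable def pd {m : ℕ} (f : (Fin m → ℝ) → ℝ) (p : Fin m → ℝ) (i : Fin m) : ℝ :=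
  fderiv ℝ f p (Pi.single i 1)

lemma update_eq_add {m : ℕ} (p : Fin m → ℝ) (i : Fin m) (t : ℝ) :
    Function.update p i t = Function.update p i 0 + t • (Pi.single i 1 : Fin m → ℝ) := by
  funext j
  by_cases h : j = i
  · subst h; simp
  · simp [Function.update_of_ne h, Pi.single_eq_of_ne h]

lemma hasDerivAt_update' {m : ℕ} (g : (Fin m → ℝ) → ℝ) (hg : ContDiff ℝ (⊤ : ℕ∞) g)
    (p : Fin m → ℝ) (i : Fin m) (t : ℝ) :
    HasDerivAt (fun s => g (Function.update p i s)) (pd g (Function.update p i t) i) t := by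
  have hinner : HasDerivAt (fun s : ℝ => Function.update p i 0 + s • (Pi.single i 1 : Fin m → ℝ))
      ((Pi.single i 1 : Fin m → ℝ)) t := by
    simpa using ((hasDerivAt_id t).smul_const ((Pi.single i 1 : Fin m → ℝ))).const_add (Function.update p i 0)
  have hd := (hg.differentiable (by simp) (Function.update p i t)).hasFDerivAt
  have heq : (fun s : ℝ => Function.update p i s)
      = fun s => Function.update p i 0 + s • (Pi.single i 1 : Fin m → ℝ) := by
    funext s; exact update_eq_add p i s
  have hinner' : HasDerivAt (fun s : ℝ => Function.update p i s)
      (Pi.single i 1 : Fin m → ℝ) t := by rw [heq]; exact hinner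
  have := hd.comp_hasDerivAt t hinner'
  simpa [pd, Function.comp_def] using this

lemma cont_pd {m : ℕ} (g : (Fin m → ℝ) → ℝ) (hg : ContDiff ℝ (⊤ : ℕ∞) g) (i : Fin m) :
    Continuous (fun p => pd g p i) := by
  exact (hg.continuous_fderiv (by simp)).clm_apply continuous_const

lemma integral_pd {m : ℕ} (g : (Fin m → ℝ) → ℝ) (hg : ContDiff ℝ (⊤ : ℕ∞) g) (i : Fin m)
    (hper : ∀ p, g (p + Pi.single i (2 * Real.pi)) = g p) (p : Fin m → ℝ) :
    ∫ t in (0:ℝ)..(2 * Real.pi), pd g (Function.update p i t) i = 0 := by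
  have hcont : Continuous (fun t : ℝ => pd g (Function.update p i t) i) := by
    apply (cont_pd g hg i).comp
    have : Continuous (fun t : ℝ => Function.update p i 0 + t • (Pi.single i 1 : Fin m → ℝ)) := by
      continuity
    simpa [← update_eq_add] using this
  rw [intervalIntegral.integral_eq_sub_of_hasDerivAt
    (fun t _ => hasDerivAt_update' g hg p i t) (hcont.intervalIntegrable _ _)]
  have : Function.update p i (2 * Real.pi) = Function.update p i 0 + Pi.single i (2 * Real.pi) := by
    funext j
    by_cases h : j = i
    · subst h; simp
    · simp [Function.update_of_ne h, Pi.single_eq_of_ne h]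
  rw [this, hper]
  simp

lemma swap_lemma (f : ℝ → ℝ → ℝ) (hf : Continuous (uncurry f)) (a b : ℝ) (ha : 0 ≤ a)
    (hb : 0 ≤ b) :
    ∫ y in (0:ℝ)..b, ∫ x in (0:ℝ)..a, f x y = ∫ x in (0:ℝ)..a, ∫ y in (0:ℝ)..b, f x y := by
  simp only [intervalIntegral.integral_of_le ha, intervalIntegral.integral_of_le hb]
  refine (MeasureTheory.integral_integral_swap ?_).symm
  rw [Measure.prod_restrict]
  exact (hf.continuousOn.integrableOn_compact (isCompact_Icc.prod isCompact_Icc)).mono_set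
    (Set.prod_mono Set.Ioc_subset_Icc_self Set.Ioc_subset_Icc_self)


/-- On `T³ = ℝ³/(2πℤ)³` with coordinates `x = p 0`, `y = p 1`,
`z = p 2` and foliation `F = ker dz`, the tangential one-form
`ζ = cos z dx + sin z dy` is an infinitesimal deformation, `d_F ζ = 0`
(here `d_F` differentiates only in the `x, y`-directions), yet it is
obstructed at second order: there is no smooth periodic tangential one-form
`η = η₁ dx + η₂ dy` solving the second-order equation
`d_F η = ζ ∧ ∂_z ζ` (whose only coefficient is `cos²z + sin²z`, i.e.
`d_F η = dx ∧ dy`), hence no formal coisotropic path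
`λ_t = dz + t ζ̄ + t² η̄ + o(t³)` with `λ_t ∧ dλ_t = 0` exists. -/
theorem torus_deformation_obstructed :
    (∀ p : Fin 3 → ℝ,
      pd (fun q => Real.sin (q 2)) p 0 - pd (fun q => Real.cos (q 2)) p 1 = 0) ∧
    ¬ ∃ η₁ η₂ : (Fin 3 → ℝ) → ℝ,
      ContDiff ℝ (⊤ : ℕ∞) η₁ ∧ ContDiff ℝ (⊤ : ℕ∞) η₂ ∧
      (∀ (p : Fin 3 → ℝ) (i : Fin 3), η₁ (p + Pi.single i (2 * Real.pi)) = η₁ p) ∧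
      (∀ (p : Fin 3 → ℝ) (i : Fin 3), η₂ (p + Pi.single i (2 * Real.pi)) = η₂ p) ∧
      (∀ p : Fin 3 → ℝ, pd η₂ p 0 - pd η₁ p 1
        = Real.cos (p 2) * Real.cos (p 2) + Real.sin (p 2) * Real.sin (p 2)) := by
  constructor
  · intro p
    have hs : HasFDerivAt (fun q : Fin 3 → ℝ => Real.sin (q 2))
        (Real.cos (p 2) • ContinuousLinearMap.proj (R := ℝ) (φ := fun _ : Fin 3 => ℝ) 2) p :=
      (Real.hasDerivAt_sin (p 2)).comp_hasFDerivAt (f := fun q : Fin 3 → ℝ => q 2) p (hasFDerivAt_apply 2 p)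
    have hc : HasFDerivAt (fun q : Fin 3 → ℝ => Real.cos (q 2))
        ((-Real.sin (p 2)) • ContinuousLinearMap.proj (R := ℝ) (φ := fun _ : Fin 3 => ℝ) 2) p :=
      (Real.hasDerivAt_cos (p 2)).comp_hasFDerivAt (f := fun q : Fin 3 → ℝ => q 2) p (hasFDerivAt_apply 2 p)
    rw [pd, pd, hs.fderiv, hc.fderiv]
    simp [Pi.single_eq_of_ne]
  · rintro ⟨η₁, η₂, h1c, h2c, hp1, hp2, heq⟩
    set T := 2 * Real.pi with hTdef
    have hT : 0 ≤ T := by positivity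
    set P : ℝ → ℝ → Fin 3 → ℝ := fun x y => ![x, y, 0] with hPdef
    have hP0 : ∀ x y t, Function.update (P x y) 0 t = P t y := by
      intro x y t; funext j; fin_cases j <;> simp [P, Function.update]
    have hP1 : ∀ x y t, Function.update (P x y) 1 t = P x t := by
      intro x y t; funext j; fin_cases j <;> simp [P, Function.update]
    have hPc : Continuous fun q : ℝ × ℝ => P q.1 q.2 := by
      apply continuous_pi; intro j; fin_cases j <;> simp [P] <;> continuity
    have hPcx : ∀ y, Continuous fun x : ℝ => P x y := fun y =>
      hPc.comp (continuous_id.prodMk continuous_const)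
    have hPcy : ∀ x, Continuous fun y : ℝ => P x y := fun x =>
      hPc.comp (continuous_const.prodMk continuous_id)
    have hone : ∀ x y : ℝ, pd η₂ (P x y) 0 - pd η₁ (P x y) 1 = 1 := by
      intro x y
      rw [heq (P x y), ← Real.sin_sq_add_cos_sq ((P x y) 2)]; ring
    have hx : ∀ y, ∫ x in (0:ℝ)..T, pd η₂ (P x y) 0 = 0 := by
      intro y
      have := integral_pd η₂ h2c 0 (fun p => hp2 p 0) (P 0 y)
      simpa only [hP0] using this
    have hy : ∀ x, ∫ y in (0:ℝ)..T, pd η₁ (P x y) 1 = 0 := by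
      intro x
      have := integral_pd η₁ h1c 1 (fun p => hp1 p 1) (P x 0)
      simpa only [hP1] using this
    have hsub : ∀ y, ∫ x in (0:ℝ)..T, (pd η₂ (P x y) 0 - pd η₁ (P x y) 1)
        = (∫ x in (0:ℝ)..T, pd η₂ (P x y) 0) - ∫ x in (0:ℝ)..T, pd η₁ (P x y) 1 := by
      intro y
      exact intervalIntegral.integral_sub
        (((cont_pd η₂ h2c 0).comp (hPcx y)).intervalIntegrable _ _)
        (((cont_pd η₁ h1c 1).comp (hPcx y)).intervalIntegrable _ _)
    have key : (∫ y in (0:ℝ)..T, ∫ x in (0:ℝ)..T,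
        (pd η₂ (P x y) 0 - pd η₁ (P x y) 1)) = T * T := by
      simp only [hone]
      simp only [intervalIntegral.integral_const, smul_eq_mul, mul_one]
      ring
    have key2 : (∫ y in (0:ℝ)..T, ∫ x in (0:ℝ)..T,
        (pd η₂ (P x y) 0 - pd η₁ (P x y) 1)) = 0 := by
      simp only [hsub, hx, zero_sub, intervalIntegral.integral_neg]
      rw [swap_lemma (fun x y => pd η₁ (P x y) 1)
        ((cont_pd η₁ h1c 1).comp hPc) T T hT hT]
      simp only [hy]
      simp
    rw [key2] at key
    have hpi := Real.pi_pos
    nlinarith [Real.pi_pos]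
end

section
/- For any Schwartz function h on ℝ, the function f(t) = sech(t) · ∫₀ᵗ h(s) cosh(s) ds is a Schwartz function and satisfies f'(t) + f(t) tanh(t) = h(t). Hence the operator f ↦ f' + f·tanh on Schwartz space is surjective. -/
section Aux
open Real intervalIntegral
open scoped ContDiff Nat

noncomputable def Kint (h : ℝ → ℝ) : ℝ → ℝ := fun t => ∫ s in (0:ℝ)..t, h s * Real.cosh s

lemma Kint_hasDerivAt (h : ℝ → ℝ) (hc : Continuous h) (t : ℝ) :
    HasDerivAt (Kint h) (h t * Real.cosh t) t := by
  apply intervalIntegral.integral_hasDerivAt_right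
  · exact (hc.mul Real.continuous_cosh).intervalIntegrable _ _
  · exact (hc.mul Real.continuous_cosh).stronglyMeasurableAtFilter _ _
  · exact (hc.mul Real.continuous_cosh).continuousAt

lemma Kint_contDiff (h : ℝ → ℝ) (hs : ContDiff ℝ ∞ h) : ContDiff ℝ ∞ (Kint h) := by
  rw [contDiff_infty_iff_deriv]
  constructor
  · exact fun t => (Kint_hasDerivAt h hs.continuous t).differentiableAt
  · have : deriv (Kint h) = fun t => h t * Real.cosh t :=
      funext fun t => (Kint_hasDerivAt h hs.continuous t).deriv
    rw [this]
    exact hs.mul Real.contDiff_cosh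

lemma sech_contDiff : ContDiff ℝ ∞ (fun t : ℝ => (Real.cosh t)⁻¹) :=
  Real.contDiff_cosh.inv (fun x => (Real.cosh_pos x).ne')

lemma sech_hasDerivAt (t : ℝ) :
    HasDerivAt (fun t : ℝ => (Real.cosh t)⁻¹) (-(Real.sinh t) / (Real.cosh t)^2) t := by
  simpa using (Real.hasDerivAt_cosh t).fun_inv (Real.cosh_pos t).ne'


lemma inv_one_add_sq_integral (t : ℝ) (ht : 0 ≤ t) :
    (∫ s in (0:ℝ)..t, ((1+s)^2)⁻¹) ≤ 1 := by
  have key : (∫ s in (0:ℝ)..t, ((1+s)^2)⁻¹) = -(1+t)⁻¹ - (-(1+(0:ℝ))⁻¹) := by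
    apply intervalIntegral.integral_eq_sub_of_hasDerivAt
    · intro x hx
      rw [Set.uIcc_of_le ht] at hx
      have h1 : (0:ℝ) < 1 + x := by linarith [hx.1]
      have : HasDerivAt (fun s : ℝ => (1+s)⁻¹) (-1/(1+x)^2) x := by
        simpa using ((hasDerivAt_id x).const_add 1).fun_inv h1.ne'
      have := this.fun_neg
      simpa [neg_div] using this
    · apply ContinuousOn.intervalIntegrable
      apply ContinuousOn.inv₀
      · fun_prop
      · intro x hx
        rw [Set.uIcc_of_le ht] at hx
        have h1 : (0:ℝ) < 1 + x := by linarith [hx.1]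
        positivity
  rw [key]
  have h1 : (0:ℝ) < 1 + t := by linarith
  have : 0 ≤ (1+t)⁻¹ := by positivity
  have h2 : ((1:ℝ)+0)⁻¹ = 1 := by norm_num
  rw [h2]
  linarith

lemma cosh_le_exp_of_nonneg {s : ℝ} (hs : 0 ≤ s) : Real.cosh s ≤ Real.exp s := by
  rw [Real.cosh_eq]
  have : Real.exp (-s) ≤ Real.exp s := Real.exp_le_exp.2 (by linarith)
  linarith

lemma inv_cosh_le {t : ℝ} : (Real.cosh t)⁻¹ ≤ 2 * Real.exp (-t) := by
  rw [Real.cosh_eq]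
  rw [inv_le_iff_one_le_mul₀ (by positivity)]
  have h1 : 0 < Real.exp (-t) := Real.exp_pos _
  have h2 : 0 < Real.exp t := Real.exp_pos _
  have h3 : Real.exp (-t) * Real.exp t = 1 := by
    rw [← Real.exp_add]; simp
  nlinarith [Real.exp_pos (-t), Real.exp_pos t]

lemma pointwise_bound (H : ℝ → ℝ) (D : ℕ → ℝ) (hD : ∀ m s, |s| ^ m * |H s| ≤ D m)
    (k : ℕ) {s t : ℝ} (hs : 0 ≤ s) (hst : s ≤ t) :
    t ^ k * (Real.cosh t)⁻¹ * |H s * Real.cosh s| ≤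
      2 ^ (k+1) * (D k + 2 * D (k+1) + D (k+2) + (k ! : ℝ) * (D 0 + 2 * D 1 + D 2)) *
        ((1+s)^2)⁻¹ := by
  have ht : 0 ≤ t := le_trans hs hst
  have habs : |s| = s := abs_of_nonneg hs
  have hfac : (0:ℝ) ≤ (k ! : ℝ) := Nat.cast_nonneg _
  have hHnn : 0 ≤ |H s| := abs_nonneg _
  -- first: t^k * (cosh t)⁻¹ * |H s * cosh s| ≤ 2^(k+1) * (s^k + k!) * |H s|
  have step1 : t ^ k * (Real.cosh t)⁻¹ * |H s * Real.cosh s| ≤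
      2 ^ (k+1) * ((s^k + (k ! : ℝ)) * |H s|) := by
    rw [abs_mul, abs_of_pos (Real.cosh_pos s)]
    have e1 : t ^ k * (Real.cosh t)⁻¹ * (|H s| * Real.cosh s) ≤
        t ^ k * (2 * Real.exp (-t)) * (|H s| * Real.exp s) := by
      apply mul_le_mul
      · exact mul_le_mul_of_nonneg_left inv_cosh_le (by positivity)
      · exact mul_le_mul_of_nonneg_left (cosh_le_exp_of_nonneg hs) hHnn
      · positivity
      · positivity
    refine e1.trans ?_
    have e2 : t ^ k * (2 * Real.exp (-t)) * (|H s| * Real.exp s) =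
        2 * (t ^ k * Real.exp (s - t)) * |H s| := by
      rw [Real.exp_sub, Real.exp_neg]
      field_simp
    rw [e2]
    have e3 : t ^ k * Real.exp (s - t) ≤ 2 ^ k * (s ^ k + (k ! : ℝ)) := by
      have h4 : t ^ k ≤ 2 ^ k * (s ^ k + (t - s) ^ k) := by
        have := add_pow_le hs (show (0:ℝ) ≤ t - s by linarith) k
        have h5 : (2:ℝ) ^ (k-1) ≤ 2 ^ k := by
          apply pow_le_pow_right₀ (by norm_num) (Nat.sub_le _ _)
        calc t ^ k = (s + (t - s)) ^ k := by ring_nf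
          _ ≤ 2 ^ (k-1) * (s ^ k + (t-s) ^ k) := this
          _ ≤ 2 ^ k * (s ^ k + (t-s) ^ k) := by
              exact mul_le_mul_of_nonneg_right h5 (add_nonneg (pow_nonneg hs k) (pow_nonneg (by linarith) k))
      have hexp1 : Real.exp (s - t) ≤ 1 := Real.exp_le_one_iff.2 (by linarith)
      have h6 : (t - s) ^ k * Real.exp (s - t) ≤ (k ! : ℝ) := by
        have h7 : (t - s) ^ k / (k ! : ℝ) ≤ Real.exp (t - s) :=
          Real.pow_div_factorial_le_exp _ (by linarith) k
        have h8 : (t - s) ^ k ≤ (k ! : ℝ) * Real.exp (t - s) := by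
          rw [div_le_iff₀ (by exact_mod_cast Nat.factorial_pos k : (0:ℝ) < (k ! : ℝ))] at h7
          linarith
        have h9 : Real.exp (t - s) * Real.exp (s - t) = 1 := by
          rw [← Real.exp_add]; simp
        calc (t - s) ^ k * Real.exp (s - t) ≤ (k ! : ℝ) * Real.exp (t-s) * Real.exp (s-t) :=
              mul_le_mul_of_nonneg_right h8 (Real.exp_pos _).le
          _ = (k ! : ℝ) := by rw [mul_assoc, h9, mul_one]
      calc t ^ k * Real.exp (s-t) ≤ (2 ^ k * (s ^ k + (t-s)^k)) * Real.exp (s-t) :=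
            mul_le_mul_of_nonneg_right h4 (Real.exp_pos _).le
        _ = 2 ^ k * (s ^ k * Real.exp (s-t) + (t-s)^k * Real.exp (s-t)) := by ring
        _ ≤ 2 ^ k * (s ^ k * 1 + (k ! : ℝ)) := by
            apply mul_le_mul_of_nonneg_left _ (by positivity)
            have := mul_le_mul_of_nonneg_left hexp1 (pow_nonneg hs k)
            linarith
        _ = 2 ^ k * (s ^ k + (k ! : ℝ)) := by ring
    calc 2 * (t ^ k * Real.exp (s - t)) * |H s| ≤
          2 * (2 ^ k * (s ^ k + (k ! : ℝ))) * |H s| := by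
          apply mul_le_mul_of_nonneg_right _ hHnn
          linarith
      _ = 2 ^ (k+1) * ((s ^ k + (k ! : ℝ)) * |H s|) := by ring
  refine step1.trans ?_
  -- second: (s^k + k!) * |H s| ≤ C'' * ((1+s)^2)⁻¹
  have hC : (s ^ k + (k ! : ℝ)) * |H s| * (1+s)^2 ≤
      D k + 2 * D (k+1) + D (k+2) + (k ! : ℝ) * (D 0 + 2 * D 1 + D 2) := by
    have h0 : |H s| ≤ D 0 := by simpa using hD 0 s
    have h1 : s * |H s| ≤ D 1 := by simpa [habs] using hD 1 s
    have h2 : s ^ 2 * |H s| ≤ D 2 := by simpa [habs] using hD 2 s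
    have hk : s ^ k * |H s| ≤ D k := by simpa [habs] using hD k s
    have hk1 : s ^ (k+1) * |H s| ≤ D (k+1) := by simpa [habs] using hD (k+1) s
    have hk2 : s ^ (k+2) * |H s| ≤ D (k+2) := by simpa [habs] using hD (k+2) s
    have e : (s ^ k + (k ! : ℝ)) * |H s| * (1+s)^2 =
        s ^ k * |H s| + 2 * (s ^ (k+1) * |H s|) + s ^ (k+2) * |H s| +
          (k ! : ℝ) * (|H s| + 2 * (s * |H s|) + s ^ 2 * |H s|) := by ring
    rw [e]
    have m0 : (k ! : ℝ) * (|H s| + 2 * (s * |H s|) + s ^ 2 * |H s|) ≤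
        (k ! : ℝ) * (D 0 + 2 * D 1 + D 2) := by
      apply mul_le_mul_of_nonneg_left _ hfac
      linarith
    linarith
  have hsq : (0:ℝ) < (1+s)^2 := by positivity
  have h2k : (0:ℝ) ≤ 2 ^ (k+1) := by positivity
  rw [show (2:ℝ) ^ (k+1) * (D k + 2 * D (k+1) + D (k+2) + (k ! : ℝ) * (D 0 + 2 * D 1 + D 2)) *
        ((1+s)^2)⁻¹ = (2 ^ (k+1) * (D k + 2 * D (k+1) + D (k+2) +
          (k ! : ℝ) * (D 0 + 2 * D 1 + D 2))) / (1+s)^2 by rw [div_eq_mul_inv],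
     le_div_iff₀ hsq]
  calc 2 ^ (k+1) * ((s ^ k + (k ! : ℝ)) * |H s|) * (1+s)^2
      = 2 ^ (k+1) * ((s ^ k + (k ! : ℝ)) * |H s| * (1+s)^2) := by ring
    _ ≤ 2 ^ (k+1) * (D k + 2 * D (k+1) + D (k+2) + (k ! : ℝ) * (D 0 + 2 * D 1 + D 2)) :=
        mul_le_mul_of_nonneg_left hC h2k

/-- The key decay bound for nonnegative `t`. -/
lemma core_nonneg (H : ℝ → ℝ) (hc : Continuous H) (D : ℕ → ℝ)
    (hD : ∀ m s, |s| ^ m * |H s| ≤ D m) (k : ℕ) {t : ℝ} (ht : 0 ≤ t) :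
    t ^ k * ((Real.cosh t)⁻¹ * |∫ s in (0:ℝ)..t, H s * Real.cosh s|) ≤
      2 ^ (k+1) * (D k + 2 * D (k+1) + D (k+2) + (k ! : ℝ) * (D 0 + 2 * D 1 + D 2)) := by
  set C : ℝ := 2 ^ (k+1) * (D k + 2 * D (k+1) + D (k+2) + (k ! : ℝ) * (D 0 + 2 * D 1 + D 2))
    with hCdef
  have hcont : Continuous (fun s => H s * Real.cosh s) := hc.mul Real.continuous_cosh
  have h1 : |∫ s in (0:ℝ)..t, H s * Real.cosh s| ≤ ∫ s in (0:ℝ)..t, |H s * Real.cosh s| :=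
    intervalIntegral.abs_integral_le_integral_abs ht
  have hnn : 0 ≤ t ^ k * (Real.cosh t)⁻¹ := by positivity
  calc t ^ k * ((Real.cosh t)⁻¹ * |∫ s in (0:ℝ)..t, H s * Real.cosh s|)
      = t ^ k * (Real.cosh t)⁻¹ * |∫ s in (0:ℝ)..t, H s * Real.cosh s| := by ring
    _ ≤ t ^ k * (Real.cosh t)⁻¹ * ∫ s in (0:ℝ)..t, |H s * Real.cosh s| :=
        mul_le_mul_of_nonneg_left h1 hnn
    _ = ∫ s in (0:ℝ)..t, t ^ k * (Real.cosh t)⁻¹ * |H s * Real.cosh s| :=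
        (intervalIntegral.integral_const_mul _ _).symm
    _ ≤ ∫ s in (0:ℝ)..t, C * ((1+s)^2)⁻¹ := by
        apply intervalIntegral.integral_mono_on ht
        · exact (continuous_const.mul hcont.abs).intervalIntegrable _ _
        · apply ContinuousOn.intervalIntegrable
          apply ContinuousOn.mul continuousOn_const
          apply ContinuousOn.inv₀ (by fun_prop)
          intro x hx
          rw [Set.uIcc_of_le ht] at hx
          have : (0:ℝ) < 1 + x := by linarith [hx.1]
          positivity
        · intro x hx
          exact pointwise_bound H D hD k hx.1 hx.2
    _ = C * ∫ s in (0:ℝ)..t, ((1+s)^2)⁻¹ := intervalIntegral.integral_const_mul _ _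
    _ ≤ C * 1 := by
        apply mul_le_mul_of_nonneg_left (inv_one_add_sq_integral t ht)
        have hD0 : ∀ m, 0 ≤ D m := fun m => le_trans (by positivity) (hD m 0)
        have := hD0 0; have := hD0 1; have := hD0 2
        have := hD0 k; have := hD0 (k+1); have := hD0 (k+2)
        have hfac : (0:ℝ) ≤ (k ! : ℝ) := Nat.cast_nonneg _
        rw [hCdef]
        positivity
    _ = C := mul_one C

/-- The key decay bound for all `t`. -/
lemma core_all (H : ℝ → ℝ) (hc : Continuous H) (D : ℕ → ℝ)
    (hD : ∀ m s, |s| ^ m * |H s| ≤ D m) (k : ℕ) (t : ℝ) :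
    |t| ^ k * ((Real.cosh t)⁻¹ * |∫ s in (0:ℝ)..t, H s * Real.cosh s|) ≤
      2 ^ (k+1) * (D k + 2 * D (k+1) + D (k+2) + (k ! : ℝ) * (D 0 + 2 * D 1 + D 2)) := by
  rcases le_total 0 t with ht | ht
  · rw [abs_of_nonneg ht]; exact core_nonneg H hc D hD k ht
  · have hu : 0 ≤ -t := by linarith
    have hD' : ∀ m s, |s| ^ m * |H (-s)| ≤ D m := by
      intro m s
      simpa [abs_neg] using hD m (-s)
    have := core_nonneg (fun x => H (-x)) (hc.comp continuous_neg) D hD' k hu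
    have hint : (∫ s in (0:ℝ)..(-t), H (-s) * Real.cosh s) =
        -∫ s in (0:ℝ)..t, H s * Real.cosh s := by
      have : (∫ s in (0:ℝ)..(-t), H (-s) * Real.cosh s) =
          ∫ s in (0:ℝ)..(-t), (fun x => H x * Real.cosh x) (-s) := by
        apply intervalIntegral.integral_congr
        intro x _
        simp [Real.cosh_neg]
      rw [this]
      have h2 := intervalIntegral.integral_comp_neg (f := fun x => H x * Real.cosh x)
        (a := (0:ℝ)) (b := -t)
      rw [h2]
      simp [intervalIntegral.integral_symm t 0]
    rw [abs_of_nonpos ht]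
    calc (-t) ^ k * ((Real.cosh t)⁻¹ * |∫ s in (0:ℝ)..t, H s * Real.cosh s|)
        = (-t) ^ k * ((Real.cosh (-t))⁻¹ * |∫ s in (0:ℝ)..(-t), H (-s) * Real.cosh s|) := by
          rw [hint, abs_neg, Real.cosh_neg]
      _ ≤ _ := this

lemma hasDerivAt_tanh (x : ℝ) : HasDerivAt Real.tanh (1 - Real.tanh x ^ 2) x := by
  have h : HasDerivAt (fun y => Real.sinh y / Real.cosh y)
      ((Real.cosh x * Real.cosh x - Real.sinh x * Real.sinh x) / Real.cosh x ^ 2) x :=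
    (Real.hasDerivAt_sinh x).div (Real.hasDerivAt_cosh x) (Real.cosh_pos x).ne'
  have hc : Real.cosh x ≠ 0 := (Real.cosh_pos x).ne'
  have e : (Real.cosh x * Real.cosh x - Real.sinh x * Real.sinh x) / Real.cosh x ^ 2 =
      1 - Real.tanh x ^ 2 := by
    have h1 : Real.cosh x ^ 2 - Real.sinh x ^ 2 = 1 := Real.cosh_sq_sub_sinh_sq x
    rw [Real.tanh_eq_sinh_div_cosh, div_pow]
    field_simp
  rw [e] at h
  have hfun : (fun y => Real.sinh y / Real.cosh y) = Real.tanh :=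
    funext fun y => (Real.tanh_eq_sinh_div_cosh y).symm
  rw [hfun] at h
  exact h

lemma hasDerivAt_sech (x : ℝ) :
    HasDerivAt (fun t : ℝ => (Real.cosh t)⁻¹)
      ((Real.cosh x)⁻¹ * (-Real.tanh x)) x := by
  have h := (Real.hasDerivAt_cosh x).inv (Real.cosh_pos x).ne'
  have hc : Real.cosh x ≠ 0 := (Real.cosh_pos x).ne'
  have e : -Real.sinh x / Real.cosh x ^ 2 = (Real.cosh x)⁻¹ * (-Real.tanh x) := by
    rw [Real.tanh_eq_sinh_div_cosh, mul_neg, inv_mul_eq_div, div_div, neg_div, ← pow_two]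
  rw [← e]
  exact h

/-- iterated derivatives of sech have the form sech · p(tanh). -/
lemma sech_iteratedDeriv (n : ℕ) : ∃ p : Polynomial ℝ,
    iteratedDeriv n (fun t : ℝ => (Real.cosh t)⁻¹) =
      fun x => (Real.cosh x)⁻¹ * p.eval (Real.tanh x) := by
  induction n with
  | zero =>
      exact ⟨1, by funext x; simp⟩
  | succ n ih =>
      obtain ⟨p, hp⟩ := ih
      refine ⟨-(Polynomial.X * p) + (1 - Polynomial.X ^ 2) * Polynomial.derivative p, ?_⟩
      rw [iteratedDeriv_succ, hp]
      funext x
      have h : HasDerivAt (fun y => (Real.cosh y)⁻¹ * p.eval (Real.tanh y))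
          ((Real.cosh x)⁻¹ * (-Real.tanh x) * p.eval (Real.tanh x) +
            (Real.cosh x)⁻¹ * ((Polynomial.derivative p).eval (Real.tanh x) *
              (1 - Real.tanh x ^ 2))) x := by
        have h1 := hasDerivAt_sech x
        have h2 : HasDerivAt (fun y => p.eval (Real.tanh y))
            ((Polynomial.derivative p).eval (Real.tanh x) * (1 - Real.tanh x ^ 2)) x :=
          (p.hasDerivAt (Real.tanh x)).comp x (hasDerivAt_tanh x)
        simpa using h1.fun_mul h2
      rw [h.deriv]
      simp only [Polynomial.eval_add, Polynomial.eval_neg, Polynomial.eval_mul,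
        Polynomial.eval_X, Polynomial.eval_sub, Polynomial.eval_one, Polynomial.eval_pow]
      ring

lemma abs_tanh_le_one (x : ℝ) : |Real.tanh x| ≤ 1 := by
  rw [abs_le, Real.tanh_eq_sinh_div_cosh]
  have hc := Real.cosh_pos x
  constructor
  · rw [le_div_iff₀ hc]
    nlinarith [Real.cosh_add_sinh x, Real.exp_pos x]
  · rw [div_le_iff₀ hc]
    nlinarith [Real.cosh_sub_sinh x, Real.exp_pos (-x)]

/-- each iterated derivative of sech is bounded by a constant times sech -/
lemma sech_iteratedDeriv_bound (n : ℕ) : ∃ A : ℝ, 0 ≤ A ∧ ∀ x,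
    |iteratedDeriv n (fun t : ℝ => (Real.cosh t)⁻¹) x| ≤ A * (Real.cosh x)⁻¹ := by
  obtain ⟨p, hp⟩ := sech_iteratedDeriv n
  obtain ⟨A, hA⟩ := (isCompact_Icc (a := (-1:ℝ)) (b := 1)).exists_bound_of_continuousOn
    p.continuous.continuousOn
  refine ⟨max A 0, le_max_right _ _, fun x => ?_⟩
  rw [hp]
  have h1 : |p.eval (Real.tanh x)| ≤ max A 0 := by
    have := hA (Real.tanh x) (by
      have := abs_tanh_le_one x
      rw [abs_le] at this
      exact ⟨this.1, this.2⟩)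
    exact le_trans (by simpa using this) (le_max_left _ _)
  rw [abs_mul, abs_of_pos (inv_pos.2 (Real.cosh_pos x)), mul_comm]
  exact mul_le_mul_of_nonneg_right h1 (inv_pos.2 (Real.cosh_pos x)).le

lemma abs_sinh_le_cosh (x : ℝ) : |Real.sinh x| ≤ Real.cosh x := by
  rw [abs_le]
  constructor
  · nlinarith [Real.cosh_add_sinh x, Real.exp_pos x]
  · nlinarith [Real.cosh_sub_sinh x, Real.exp_pos (-x)]

lemma cosh_iteratedDeriv (i : ℕ) :
    iteratedDeriv i Real.cosh = Real.cosh ∨ iteratedDeriv i Real.cosh = Real.sinh := by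
  induction i with
  | zero => left; simp [iteratedDeriv_zero]
  | succ i ih =>
      rw [iteratedDeriv_succ]
      rcases ih with hc | hc <;> rw [hc]
      · right; exact Real.deriv_cosh
      · left; exact Real.deriv_sinh

lemma cosh_iteratedFDeriv_norm_le (i : ℕ) (x : ℝ) :
    ‖iteratedFDeriv ℝ i Real.cosh x‖ ≤ Real.cosh x := by
  rw [norm_iteratedFDeriv_eq_norm_iteratedDeriv]
  rcases cosh_iteratedDeriv i with hc | hc <;> rw [hc]
  · rw [Real.norm_eq_abs, abs_of_pos (Real.cosh_pos x)]
  · rw [Real.norm_eq_abs]; exact abs_sinh_le_cosh x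

/-- key bound: sech times iterated derivatives of `Kint h`, with polynomial weight. -/
lemma key_bound (h : SchwartzMap ℝ ℝ) (k m : ℕ) :
    ∃ B : ℝ, ∀ x : ℝ, ‖x‖ ^ k * ((Real.cosh x)⁻¹ * ‖iteratedFDeriv ℝ m (Kint (⇑h)) x‖) ≤ B := by
  have hcont : Continuous (⇑h) := h.continuous
  cases m with
  | zero =>
    obtain ⟨D, hD⟩ : ∃ D : ℕ → ℝ, ∀ j s, |s| ^ j * |h s| ≤ D j := by
      refine ⟨fun j => (h.decay j 0).choose, fun j s => ?_⟩
      have := (h.decay j 0).choose_spec.2 s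
      simpa [norm_iteratedFDeriv_zero, Real.norm_eq_abs] using this
    refine ⟨2 ^ (k+1) * (D k + 2 * D (k+1) + D (k+2) + (k ! : ℝ) * (D 0 + 2 * D 1 + D 2)),
      fun x => ?_⟩
    have := core_all (⇑h) hcont D hD k x
    simpa [norm_iteratedFDeriv_zero, Real.norm_eq_abs, Kint] using this
  | succ j =>
    obtain ⟨E, hE⟩ : ∃ E : ℕ → ℝ, ∀ l x, ‖x‖ ^ k * ‖iteratedFDeriv ℝ l (⇑h) x‖ ≤ E l :=
      ⟨fun l => (h.decay k l).choose, fun l => (h.decay k l).choose_spec.2⟩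
    refine ⟨∑ l ∈ Finset.range (j+1), (j.choose l : ℝ) * E l, fun x => ?_⟩
    have hKd : iteratedDeriv (j+1) (Kint (⇑h)) = iteratedDeriv j (fun t => h t * Real.cosh t) := by
      rw [iteratedDeriv_succ']
      have hder : deriv (Kint (⇑h)) = fun t => h t * Real.cosh t :=
        funext fun t => (Kint_hasDerivAt (⇑h) hcont t).deriv
      rw [hder]
    have h1 : ‖iteratedFDeriv ℝ (j+1) (Kint (⇑h)) x‖ =
        ‖iteratedFDeriv ℝ j (fun t => h t * Real.cosh t) x‖ := by
      rw [norm_iteratedFDeriv_eq_norm_iteratedDeriv, norm_iteratedFDeriv_eq_norm_iteratedDeriv,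
        hKd]
    have h2 : ‖iteratedFDeriv ℝ j (fun t => h t * Real.cosh t) x‖ ≤
        ∑ l ∈ Finset.range (j+1), (j.choose l : ℝ) * ‖iteratedFDeriv ℝ l (⇑h) x‖ *
          ‖iteratedFDeriv ℝ (j-l) Real.cosh x‖ :=
      norm_iteratedFDeriv_mul_le (h.smooth ⊤) Real.contDiff_cosh x (by exact_mod_cast le_top)
    have h3 : ‖iteratedFDeriv ℝ j (fun t => h t * Real.cosh t) x‖ ≤
        (∑ l ∈ Finset.range (j+1), (j.choose l : ℝ) * ‖iteratedFDeriv ℝ l (⇑h) x‖) *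
          Real.cosh x := by
      refine h2.trans ?_
      rw [Finset.sum_mul]
      apply Finset.sum_le_sum
      intro l _
      exact mul_le_mul_of_nonneg_left (cosh_iteratedFDeriv_norm_le _ x) (by positivity)
    calc ‖x‖ ^ k * ((Real.cosh x)⁻¹ * ‖iteratedFDeriv ℝ (j+1) (Kint (⇑h)) x‖)
        ≤ ‖x‖ ^ k * ((Real.cosh x)⁻¹ *
            ((∑ l ∈ Finset.range (j+1), (j.choose l : ℝ) * ‖iteratedFDeriv ℝ l (⇑h) x‖) *
              Real.cosh x)) := by
          apply mul_le_mul_of_nonneg_left _ (by positivity)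
          apply mul_le_mul_of_nonneg_left _ (by positivity)
          rw [h1]; exact h3
      _ = ∑ l ∈ Finset.range (j+1), (j.choose l : ℝ) *
            (‖x‖ ^ k * ‖iteratedFDeriv ℝ l (⇑h) x‖) := by
          have hc1 : (Real.cosh x)⁻¹ * Real.cosh x = 1 := inv_mul_cancel₀ (Real.cosh_pos x).ne'
          rw [show (Real.cosh x)⁻¹ * ((∑ l ∈ Finset.range (j+1), (j.choose l : ℝ) *
              ‖iteratedFDeriv ℝ l (⇑h) x‖) * Real.cosh x) =
              ((Real.cosh x)⁻¹ * Real.cosh x) * ∑ l ∈ Finset.range (j+1), (j.choose l : ℝ) *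
              ‖iteratedFDeriv ℝ l (⇑h) x‖ by ring, hc1, one_mul, Finset.mul_sum]
          exact Finset.sum_congr rfl fun l _ => by ring
      _ ≤ ∑ l ∈ Finset.range (j+1), (j.choose l : ℝ) * E l := by
          apply Finset.sum_le_sum
          intro l _
          exact mul_le_mul_of_nonneg_left (hE l x) (by positivity)

lemma f_decay (h : SchwartzMap ℝ ℝ) (k n : ℕ) :
    ∃ C, ∀ x, ‖x‖ ^ k *
      ‖iteratedFDeriv ℝ n (fun t => (Real.cosh t)⁻¹ * Kint (⇑h) t) x‖ ≤ C := by
  obtain ⟨A, hA⟩ : ∃ A : ℕ → ℝ, ∀ i, 0 ≤ A i ∧ ∀ x,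
      |iteratedDeriv i (fun t : ℝ => (Real.cosh t)⁻¹) x| ≤ A i * (Real.cosh x)⁻¹ :=
    ⟨fun i => (sech_iteratedDeriv_bound i).choose,
      fun i => (sech_iteratedDeriv_bound i).choose_spec⟩
  obtain ⟨B, hB⟩ : ∃ B : ℕ → ℝ, ∀ m x,
      ‖x‖ ^ k * ((Real.cosh x)⁻¹ * ‖iteratedFDeriv ℝ m (Kint (⇑h)) x‖) ≤ B m :=
    ⟨fun m => (key_bound h k m).choose, fun m => (key_bound h k m).choose_spec⟩
  refine ⟨∑ i ∈ Finset.range (n+1), (n.choose i : ℝ) * (A i * B (n-i)), fun x => ?_⟩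
  have hmul : ‖iteratedFDeriv ℝ n (fun t => (Real.cosh t)⁻¹ * Kint (⇑h) t) x‖ ≤
      ∑ i ∈ Finset.range (n+1), (n.choose i : ℝ) *
        ‖iteratedFDeriv ℝ i (fun t : ℝ => (Real.cosh t)⁻¹) x‖ *
        ‖iteratedFDeriv ℝ (n-i) (Kint (⇑h)) x‖ :=
    norm_iteratedFDeriv_mul_le sech_contDiff (Kint_contDiff _ (h.smooth ⊤)) x
      (by exact_mod_cast le_top)
  calc ‖x‖ ^ k * ‖iteratedFDeriv ℝ n (fun t => (Real.cosh t)⁻¹ * Kint (⇑h) t) x‖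
      ≤ ‖x‖ ^ k * ∑ i ∈ Finset.range (n+1), (n.choose i : ℝ) *
        ‖iteratedFDeriv ℝ i (fun t : ℝ => (Real.cosh t)⁻¹) x‖ *
        ‖iteratedFDeriv ℝ (n-i) (Kint (⇑h)) x‖ :=
        mul_le_mul_of_nonneg_left hmul (by positivity)
    _ = ∑ i ∈ Finset.range (n+1), (n.choose i : ℝ) *
        (‖x‖ ^ k * ‖iteratedFDeriv ℝ i (fun t : ℝ => (Real.cosh t)⁻¹) x‖ *
          ‖iteratedFDeriv ℝ (n-i) (Kint (⇑h)) x‖) := by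
        rw [Finset.mul_sum]
        exact Finset.sum_congr rfl fun i _ => by ring
    _ ≤ ∑ i ∈ Finset.range (n+1), (n.choose i : ℝ) * (A i * B (n-i)) := by
        apply Finset.sum_le_sum
        intro i _
        apply mul_le_mul_of_nonneg_left _ (Nat.cast_nonneg _)
        have hs1 : ‖iteratedFDeriv ℝ i (fun t : ℝ => (Real.cosh t)⁻¹) x‖ ≤
            A i * (Real.cosh x)⁻¹ := by
          rw [norm_iteratedFDeriv_eq_norm_iteratedDeriv, Real.norm_eq_abs]
          exact (hA i).2 x
        calc ‖x‖ ^ k * ‖iteratedFDeriv ℝ i (fun t : ℝ => (Real.cosh t)⁻¹) x‖ *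
              ‖iteratedFDeriv ℝ (n-i) (Kint (⇑h)) x‖
            ≤ ‖x‖ ^ k * (A i * (Real.cosh x)⁻¹) *
              ‖iteratedFDeriv ℝ (n-i) (Kint (⇑h)) x‖ := by
              apply mul_le_mul_of_nonneg_right _ (norm_nonneg _)
              exact mul_le_mul_of_nonneg_left hs1 (by positivity)
          _ = A i * (‖x‖ ^ k * ((Real.cosh x)⁻¹ *
                ‖iteratedFDeriv ℝ (n-i) (Kint (⇑h)) x‖)) := by ring
          _ ≤ A i * B (n-i) := mul_le_mul_of_nonneg_left (hB (n-i) x) ((hA i).1)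

noncomputable def solution (h : SchwartzMap ℝ ℝ) : SchwartzMap ℝ ℝ where
  toFun := fun t => (Real.cosh t)⁻¹ * Kint (⇑h) t
  smooth' := sech_contDiff.mul (Kint_contDiff _ (h.smooth ⊤))
  decay' := fun k n => f_decay h k n

lemma solution_deriv (h : SchwartzMap ℝ ℝ) (t : ℝ) :
    deriv (fun t => (Real.cosh t)⁻¹ * Kint (⇑h) t) t +
      ((Real.cosh t)⁻¹ * Kint (⇑h) t) * Real.tanh t = h t := by
  have h1 := (hasDerivAt_sech t).fun_mul (Kint_hasDerivAt (⇑h) h.continuous t)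
  rw [h1.deriv]
  have hc : Real.cosh t ≠ 0 := (Real.cosh_pos t).ne'
  rw [Real.tanh_eq_sinh_div_cosh]
  field_simp
  ring

end Aux


/-- For any Schwartz function `h` on `ℝ`, the function
`f(t) = sech(t) · ∫₀ᵗ h(s) cosh(s) ds` is a Schwartz function and satisfies
`f'(t) + f(t) tanh(t) = h(t)`.  Hence the operator `f ↦ f' + f·tanh` is
surjective on Schwartz space. -/
theorem sech_integral_solves_and_is_schwartz (h : SchwartzMap ℝ ℝ) :
    let f : ℝ → ℝ := fun t => (1 / Real.cosh t) * ∫ s in (0:ℝ)..t, h s * Real.cosh s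
    ((∀ t, deriv f t + f t * Real.tanh t = h t) ∧
      ∃ g : SchwartzMap ℝ ℝ, (g : ℝ → ℝ) = f) ∧
    ∀ h' : SchwartzMap ℝ ℝ, ∃ g : SchwartzMap ℝ ℝ,
      ∀ t, deriv (g : ℝ → ℝ) t + g t * Real.tanh t = h' t := by
  intro f
  have hf : f = fun t => (Real.cosh t)⁻¹ * Kint (⇑h) t := by
    funext t
    simp only [Kint, one_div, f]
  rw [hf]
  refine ⟨⟨fun t => solution_deriv h t, ⟨solution h, rfl⟩⟩, ?_⟩
  intro h'
  exact ⟨solution h', fun t => solution_deriv h' t⟩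
end

section
/- On T² with foliation F = ker(dy + sin y dx), the ordinary (untwisted) tangential cohomology H⁰(F) is isomorphic to ℝ, generated by the constant functions: every smooth function f on T² with ∂_x f − sin y ∂_y f = 0 is constant. -/
private lemma vec_eq_single (a b : ℝ) :
    (![a, b] : Fin 2 → ℝ) = a • (Pi.single 0 1 : Fin 2 → ℝ) + b • (Pi.single 1 1 : Fin 2 → ℝ) := by
  funext i; fin_cases i <;> simp

private lemma fderiv_apply_vec (f : (Fin 2 → ℝ) → ℝ) (p : Fin 2 → ℝ) (a b : ℝ) :
    fderiv ℝ f p ![a, b] = a * pd f p 0 + b * pd f p 1 := by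
  rw [vec_eq_single, map_add, map_smul, map_smul]
  simp [pd, smul_eq_mul]

private lemma hasDerivAt_phi (c t : ℝ) :
    HasDerivAt (fun t => 2 * Real.arctan (c * Real.exp (-t)))
      (-(Real.sin (2 * Real.arctan (c * Real.exp (-t))))) t := by
  have hu : HasDerivAt (fun t => c * Real.exp (-t)) (-(c * Real.exp (-t))) t := by
    have h1 : HasDerivAt (fun t : ℝ => Real.exp (-t)) (Real.exp (-t) * (-1)) t :=
      (Real.hasDerivAt_exp (-t)).comp t ((hasDerivAt_id t).neg)
    have := h1.const_mul c
    exact this.congr_deriv (by ring)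
  have ha := (Real.hasDerivAt_arctan (c * Real.exp (-t))).comp t hu
  have h2 := ha.const_mul 2
  refine h2.congr_deriv (Eq.symm ?_)
  set v := c * Real.exp (-t) with hv
  have h1 : (0:ℝ) < 1 + v^2 := by positivity
  have h3 : Real.sqrt (1+v^2) ≠ 0 := by positivity
  have h4 : Real.sqrt (1+v^2) * Real.sqrt (1+v^2) = 1+v^2 := Real.mul_self_sqrt h1.le
  rw [Real.sin_two_mul, Real.sin_arctan, Real.cos_arctan]
  field_simp
  rw [Real.sq_sqrt h1.le]

/-- On `T² = (ℝ/2πℤ)²` (coordinates `x = p 0`, `y = p 1`) with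
the foliation `F = ker(dy + sin y dx)`, every smooth leafwise-constant function
is globally constant: if `f` is smooth, `2π`-periodic in both variables, and
`X f = 0` for the leafwise vector field `X = ∂_x − sin y ∂_y`, then `f` is
constant.  Hence `H⁰(F) ≅ ℝ`, generated by the constant functions. -/
theorem tangential_H0_is_constants
    (f : (Fin 2 → ℝ) → ℝ) (hf : ContDiff ℝ (⊤ : ℕ∞) f)
    (hper : ∀ (p : Fin 2 → ℝ) (i : Fin 2), f (p + Pi.single i (2 * Real.pi)) = f p)
    (hpde : ∀ p : Fin 2 → ℝ, pd f p 0 - Real.sin (p 1) * pd f p 1 = 0) :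
    ∀ p q, f p = f q := by
  have hdf : Differentiable ℝ f := hf.differentiable (by simp)
  have hcont : Continuous f := hf.continuous
  have hpi := Real.pi_pos
  -- X f = 0 as a fderiv statement
  have hXf : ∀ p : Fin 2 → ℝ, fderiv ℝ f p ![1, -(Real.sin (p 1))] = 0 := by
    intro p
    rw [fderiv_apply_vec]
    linear_combination hpde p
  -- integer periodicity
  have hperZ : ∀ (k : ℤ) (p : Fin 2 → ℝ) (i : Fin 2),
      f (p + (k : ℝ) • (Pi.single i (2 * Real.pi) : Fin 2 → ℝ)) = f p := by
    intro k
    induction k using Int.induction_on with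
    | zero => intro p i; simp
    | succ n ih =>
        intro p i
        have he : p + ((n+1 : ℕ) : ℝ) • (Pi.single i (2*Real.pi) : Fin 2 → ℝ)
             = (p + (n : ℝ) • (Pi.single i (2*Real.pi) : Fin 2 → ℝ)) + (Pi.single i (2*Real.pi) : Fin 2 → ℝ) := by
          push_cast; module
        push_cast
        push_cast at he
        rw [he, hper]
        exact_mod_cast ih p i
    | pred n ih =>
        intro p i
        have ih' : f (p + (-(n:ℝ)) • (Pi.single i (2*Real.pi) : Fin 2 → ℝ)) = f p := by
          exact_mod_cast ih p i
        have h1 := hper (p + ((-(n:ℝ)-1)) • (Pi.single i (2*Real.pi) : Fin 2 → ℝ)) i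
        have he : p + (-(n:ℝ)-1) • (Pi.single i (2*Real.pi) : Fin 2 → ℝ) + (Pi.single i (2*Real.pi) : Fin 2 → ℝ)
             = p + (-(n:ℝ)) • (Pi.single i (2*Real.pi) : Fin 2 → ℝ) := by module
        rw [he] at h1
        push_cast
        rw [← h1]
        exact ih'
  -- constancy of f along the explicit flow lines
  have key : ∀ x c s t : ℝ,
      f ![x + s, 2 * Real.arctan (c * Real.exp (-s))] =
      f ![x + t, 2 * Real.arctan (c * Real.exp (-t))] := by
    intro x c
    have hder : ∀ t : ℝ, HasDerivAt
        (fun t => f ![x + t, 2 * Real.arctan (c * Real.exp (-t))]) 0 t := by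
      intro t
      have hγ : HasDerivAt
          (fun t => (![x + t, 2 * Real.arctan (c * Real.exp (-t))] : Fin 2 → ℝ))
          ![1, -(Real.sin (2 * Real.arctan (c * Real.exp (-t))))] t := by
        rw [hasDerivAt_pi]
        intro i
        fin_cases i
        · simpa using (hasDerivAt_id t).const_add x
        · simpa using hasDerivAt_phi c t
      have hc := (hdf.differentiableAt.hasFDerivAt).comp_hasDerivAt t hγ
      have h0 := hXf (![x + t, 2 * Real.arctan (c * Real.exp (-t))] : Fin 2 → ℝ)
      simp only [Matrix.cons_val_one, Matrix.head_cons, Matrix.cons_val_zero] at h0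
      rw [h0] at hc
      exact hc
    intro s t
    exact is_const_of_deriv_eq_zero (fun u => (hder u).differentiableAt)
      (fun u => (hder u).deriv) s t
  -- leaf y = 0 : f is constant there
  have hx0 : ∀ a b : ℝ, f ![a, 0] = f ![b, 0] := by
    intro a b
    have := key 0 0 a b
    simpa using this
  -- interior leaves
  have claim2 : ∀ x y : ℝ, -Real.pi < y → y < Real.pi → f ![x, y] = f ![x, 0] := by
    intro x y hy1 hy2
    set c := Real.tan (y/2) with hc
    have h0 : 2 * Real.arctan (c * Real.exp (-0)) = y := by
      rw [hc]
      simp [Real.arctan_tan (by linarith : -(Real.pi/2) < y/2) (by linarith : y/2 < Real.pi/2)]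
      ring
    have hseq : ∀ n : ℕ, f ![x, y] = f ![x, 2 * Real.arctan (c * Real.exp (-(2*Real.pi*n)))] := by
      intro n
      have h1 := key x c 0 (2*Real.pi*n)
      rw [add_zero, h0] at h1
      have h2 : (![x + 2*Real.pi*n, 2*Real.arctan (c*Real.exp (-(2*Real.pi*n)))] : Fin 2 → ℝ)
          = ![x, 2*Real.arctan (c*Real.exp (-(2*Real.pi*n)))]
            + ((n:ℤ):ℝ) • (Pi.single 0 (2*Real.pi) : Fin 2 → ℝ) := by
        funext j; fin_cases j <;> simp [Pi.single_apply] <;> push_cast <;> ring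
      rw [h1, h2, hperZ]
    have h3 : Filter.Tendsto (fun n : ℕ => 2 * Real.arctan (c * Real.exp (-(2*Real.pi*n))))
        Filter.atTop (nhds 0) := by
      have hb : Filter.Tendsto (fun n : ℕ => -(2*Real.pi*(n:ℝ))) Filter.atTop Filter.atBot := by
        apply Filter.tendsto_neg_atBot_iff.mpr
        exact Filter.Tendsto.const_mul_atTop (by positivity) tendsto_natCast_atTop_atTop
      have he : Filter.Tendsto (fun n : ℕ => Real.exp (-(2*Real.pi*(n:ℝ)))) Filter.atTop (nhds 0) :=
        Real.tendsto_exp_atBot.comp hb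
      have h4 : Filter.Tendsto (fun n : ℕ => Real.arctan (c * Real.exp (-(2*Real.pi*n))))
          Filter.atTop (nhds (Real.arctan 0)) :=
        (Real.continuous_arctan.tendsto 0).comp (by simpa using he.const_mul c)
      have h5 := h4.const_mul 2
      simpa using h5
    have hc2 : Continuous (fun z : ℝ => f ![x, z]) := by
      apply hcont.comp
      refine continuous_pi fun i => ?_
      fin_cases i
      · simpa using continuous_const
      · simpa using continuous_id'
    have hlim : Filter.Tendsto (fun n : ℕ => f ![x, 2 * Real.arctan (c * Real.exp (-(2*Real.pi*n)))])
        Filter.atTop (nhds (f ![x, 0])) := by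
      have := (hc2.tendsto 0).comp h3
      exact this
    have hconst : Filter.Tendsto (fun n : ℕ => f ![x, 2 * Real.arctan (c * Real.exp (-(2*Real.pi*n)))])
        Filter.atTop (nhds (f ![x, y])) := by
      refine Filter.Tendsto.congr (fun n => hseq n) tendsto_const_nhds
    exact tendsto_nhds_unique hconst hlim
  -- the other closed leaf y = π, by continuity
  have claim3 : ∀ x : ℝ, f ![x, Real.pi] = f ![x, 0] := by
    intro x
    have hseq : ∀ n : ℕ, f ![x, Real.pi - 1/(n+1)] = f ![x, 0] := by
      intro n
      apply claim2
      · have : (1:ℝ)/(n+1) ≤ 1 := by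
          rw [div_le_one (by positivity)]; linarith [Nat.cast_nonneg (α := ℝ) n]
        linarith [Real.pi_gt_three]
      · have : (0:ℝ) < 1/(n+1) := by positivity
        linarith
    have hc2 : Continuous (fun z : ℝ => f ![x, z]) := by
      apply hcont.comp
      refine continuous_pi fun i => ?_
      fin_cases i
      · simpa using continuous_const
      · simpa using continuous_id'
    have ht : Filter.Tendsto (fun n : ℕ => Real.pi - 1/((n:ℝ)+1)) Filter.atTop (nhds Real.pi) := by
      have := tendsto_one_div_add_atTop_nhds_zero_nat (𝕜 := ℝ)
      have h := (tendsto_const_nhds (x := Real.pi) (f := Filter.atTop (α := ℕ))).sub this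
      simpa using h
    have h1 : Filter.Tendsto (fun n : ℕ => f ![x, Real.pi - 1/((n:ℝ)+1)]) Filter.atTop
        (nhds (f ![x, Real.pi])) := (hc2.tendsto _).comp ht
    have h2 : Filter.Tendsto (fun n : ℕ => f ![x, Real.pi - 1/((n:ℝ)+1)]) Filter.atTop
        (nhds (f ![x, 0])) := by
      refine Filter.Tendsto.congr (fun n => (hseq n).symm) tendsto_const_nhds
    exact tendsto_nhds_unique h1 h2
  -- all points
  have hall : ∀ x y : ℝ, f ![x, y] = f ![(0:ℝ), 0] := by
    intro x y
    set k := ⌊(y + Real.pi)/(2*Real.pi)⌋ with hk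
    have hk1 : (k:ℝ) * (2*Real.pi) ≤ y + Real.pi :=
      (le_div_iff₀ (by positivity)).mp (Int.floor_le _)
    have hk2 : y + Real.pi < ((k:ℝ)+1) * (2*Real.pi) := by
      have := Int.lt_floor_add_one ((y + Real.pi)/(2*Real.pi))
      have := (div_lt_iff₀ (by positivity : (0:ℝ) < 2*Real.pi)).mp this
      linarith
    set y' := y - 2*Real.pi*k with hy'
    have hy1 : -Real.pi ≤ y' := by rw [hy']; nlinarith
    have hy2 : y' < Real.pi := by rw [hy']; nlinarith
    have heq : f ![x, y] = f ![x, y'] := by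
      have hv : (![x, y] : Fin 2 → ℝ) = ![x, y'] + (k:ℝ) • (Pi.single 1 (2*Real.pi) : Fin 2 → ℝ) := by
        funext j; fin_cases j <;> simp [Pi.single_apply, hy'] <;> ring
      rw [hv, hperZ]
    rcases eq_or_lt_of_le hy1 with h | h
    · have h2 : f ![x, y'] = f ![x, Real.pi] := by
        have hv : (![x, y'] : Fin 2 → ℝ)
            = ![x, Real.pi] + ((-1:ℤ):ℝ) • (Pi.single 1 (2*Real.pi) : Fin 2 → ℝ) := by
          funext j; fin_cases j <;> simp [Pi.single_apply, ← h] <;> ring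
        rw [hv, hperZ]
      rw [heq, h2, claim3 x, hx0 x 0]
    · rw [heq, claim2 x y' h hy2, hx0 x 0]
  intro p q
  have hp : p = ![p 0, p 1] := by funext j; fin_cases j <;> rfl
  have hq : q = ![q 0, q 1] := by funext j; fin_cases j <;> rfl
  rw [hp, hq, hall (p 0) (p 1), hall (q 0) (q 1)]
end
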